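/- arXiv:2208.12896 — 4 statements merged into one kernel-verified Lean document; each statement's English description precedes it below -/
import Mathlib

section
/- Let b ∈ (0, 1/4) and let P0, P1 be the probability measures on {0,1}^k whose coordinates are i.i.d. Bernoulli(1/2 - b) and Bernoulli(1/2 + b) respectively. For any string s ∈ {0,1}^k with q1 ones and q0 = k - q1 zeros, |P0({s}) - P1({s})| ≤ 8·b·|q1 - q0|·(P0({s}) + P1({s}))/2. -/
/-!
Write `x = 1/2 + b` and `y = 1/2 - b`, so that the two probabilities are `x^q0 y^q1` and
`y^q0 x^q1`. After cancelling the common factor `(x y)^min(q0,q1)` one has to compare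
`x^d - y^d` with `x^d + y^d` for `d = |q1 - q0|`. Bounding the geometric sum in
`x^d - y^d = (x - y) (x^(d-1) + ⋯ + y^(d-1))` termwise by `x^(d-1)` gives
`x^d - y^d ≤ d (x - y) / x · (x^d + y^d)`, and here `x - y = 2b` and `1/x ≤ 2`.
-/

section LinearOrderedCommRing

variable {α : Type*} [CommRing α] [LinearOrder α] [IsOrderedRing α] {x y : α}

lemma mul_pow_sub_pow_le (hy : 0 ≤ y) (hyx : y ≤ x) (n : ℕ) :
    x * (x ^ n - y ^ n) ≤ n * (x - y) * x ^ n := by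
  obtain _ | n := n
  · simp
  have hx : 0 ≤ x := hy.trans hyx
  have h := abs_pow_sub_pow_le x y (n + 1)
  rw [abs_of_nonneg (sub_nonneg.2 (pow_le_pow_left₀ hy hyx _)), abs_of_nonneg (sub_nonneg.2 hyx),
    abs_of_nonneg hx, abs_of_nonneg hy, max_eq_left hyx, Nat.add_sub_cancel] at h
  calc x * (x ^ (n + 1) - y ^ (n + 1)) ≤ x * ((x - y) * ↑(n + 1) * x ^ n) := by gcongr
    _ = ↑(n + 1) * (x - y) * x ^ (n + 1) := by ring

lemma mul_abs_pow_mul_pow_sub_pow_mul_pow_le (hy : 0 ≤ y) (hyx : y ≤ x) (m n : ℕ) :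
    x * |x ^ m * y ^ n - y ^ m * x ^ n| ≤
      |(n : α) - m| * (x - y) * (x ^ m * y ^ n + y ^ m * x ^ n) := by
  wlog hmn : m ≤ n generalizing m n
  · have hdiff : x ^ m * y ^ n - y ^ m * x ^ n = -(x ^ n * y ^ m - y ^ n * x ^ m) := by ring
    have hsum : x ^ m * y ^ n + y ^ m * x ^ n = x ^ n * y ^ m + y ^ n * x ^ m := by ring
    rw [hdiff, abs_neg, hsum, abs_sub_comm (n : α)]
    exact this n m (le_of_not_ge hmn)
  obtain ⟨d, rfl⟩ := Nat.exists_eq_add_of_le hmn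
  have hxy : 0 ≤ (x * y) ^ m := pow_nonneg (mul_nonneg (hy.trans hyx) hy) m
  have hdiff : x ^ m * y ^ (m + d) - y ^ m * x ^ (m + d) = -((x * y) ^ m * (x ^ d - y ^ d)) := by
    ring
  have hsum : x ^ m * y ^ (m + d) + y ^ m * x ^ (m + d) = (x * y) ^ m * (x ^ d + y ^ d) := by
    ring
  have hpow : 0 ≤ x ^ d - y ^ d := sub_nonneg.2 (pow_le_pow_left₀ hy hyx d)
  rw [hdiff, hsum, abs_neg, abs_of_nonneg (mul_nonneg hxy hpow), Nat.cast_add, add_sub_cancel_left, abs_of_nonneg (Nat.cast_nonneg d)]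
  have hd : 0 ≤ (d : α) * (x - y) * y ^ d := by
    have := sub_nonneg.2 hyx
    positivity
  calc x * ((x * y) ^ m * (x ^ d - y ^ d)) = (x * y) ^ m * (x * (x ^ d - y ^ d)) := by ring
    _ ≤ (x * y) ^ m * (d * (x - y) * x ^ d + d * (x - y) * y ^ d) := by
      gcongr
      exact le_add_of_le_of_nonneg (mul_pow_sub_pow_le hy hyx d) hd
    _ = d * (x - y) * ((x * y) ^ m * (x ^ d + y ^ d)) := by ring

end LinearOrderedCommRing

theorem stmt_5_general (b : ℝ) (hb0 : 0 < b) (hb : b < 1/4) (q0 q1 : ℕ) :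
    |(1/2 + b) ^ q0 * (1/2 - b) ^ q1 - (1/2 - b) ^ q0 * (1/2 + b) ^ q1|
      ≤ 8 * b * |(q1 : ℝ) - (q0 : ℝ)| *
        (((1/2 + b) ^ q0 * (1/2 - b) ^ q1 + (1/2 - b) ^ q0 * (1/2 + b) ^ q1) / 2) := by
  set D := (1/2 + b) ^ q0 * (1/2 - b) ^ q1 - (1/2 - b) ^ q0 * (1/2 + b) ^ q1
  set S := (1/2 + b) ^ q0 * (1/2 - b) ^ q1 + (1/2 - b) ^ q0 * (1/2 + b) ^ q1
  have hbound : (1/2 + b) * |D| ≤ |(q1 : ℝ) - q0| * ((1/2 + b) - (1/2 - b)) * S :=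
    mul_abs_pow_mul_pow_sub_pow_mul_pow_le (by linarith) (by linarith) q0 q1
  calc |D| ≤ 2 * ((1/2 + b) * |D|) := by nlinarith [abs_nonneg D]
    _ ≤ 2 * (|(q1 : ℝ) - q0| * ((1/2 + b) - (1/2 - b)) * S) := by gcongr
    _ = 8 * b * |(q1 : ℝ) - q0| * (S / 2) := by ring

/-- Probability of a string with `q0` zeros and `q1` ones under i.i.d. Bernoulli(1/2 - b)
(where a `1` has probability 1/2 - b). -/
theorem stmt_5 (b : ℝ) (hb0 : 0 < b) (hb : b < 1/4) (k q0 q1 : ℕ) (hk : q0 + q1 = k) :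
    |(1/2 + b) ^ q0 * (1/2 - b) ^ q1 - (1/2 - b) ^ q0 * (1/2 + b) ^ q1|
      ≤ 8 * b * |(q1 : ℝ) - (q0 : ℝ)| *
        (((1/2 + b) ^ q0 * (1/2 - b) ^ q1 + (1/2 - b) ^ q0 * (1/2 + b) ^ q1) / 2) :=
  stmt_5_general b hb0 hb q0 q1
end

section
/- Let N_a, N_b be positive naturals, N = N_a + N_b, and let q_a, q_b be naturals with q_a + q_b = k, k ≤ √N / 2, q_a ≤ N_a/2, q_b ≤ N_b/2. Then the hypergeometric probability H(q_a, q_b) = [C(N_a, q_a)·C(N_b, q_b)] / C(N, k) and the binomial probability M(q_a, q_b) = C(k, q_a)·(N_a/N)^{q_a}·(N_b/N)^{q_b} satisfy (1 - 2q_a²/N_a - 2q_b²/N_b)·M(q_a,q_b) ≤ H(q_a,q_b) ≤ (1 + 4k²/N)·M(q_a,q_b). -/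
open Finset

lemma choose_eq_prod (n q : ℕ) (h : q ≤ n) :
    (Nat.choose n q : ℝ) * (Nat.factorial q : ℝ) = ∏ i ∈ range q, ((n : ℝ) - i) := by
  have h1 := Nat.descFactorial_eq_factorial_mul_choose n q
  have h2 := Nat.descFactorial_eq_prod_range n q
  have : ((Nat.descFactorial n q : ℕ) : ℝ) = ∏ i ∈ range q, ((n : ℝ) - i) := by
    rw [h2, Nat.cast_prod]
    refine Finset.prod_congr rfl fun i hi => ?_
    have : i ≤ n := le_trans (le_of_lt (mem_range.mp hi)) h
    push_cast [Nat.cast_sub this]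
    ring
  rw [← this, h1]
  push_cast
  ring

lemma weier (q : ℕ) (x : ℕ → ℝ) (h0 : ∀ i ∈ range q, 0 ≤ x i) (h1 : ∀ i ∈ range q, x i ≤ 1) :
    1 - ∑ i ∈ range q, x i ≤ ∏ i ∈ range q, (1 - x i) := by
  induction q with
  | zero => simp
  | succ n ih =>
    rw [Finset.prod_range_succ, Finset.sum_range_succ]
    have hn0 : ∀ i ∈ range n, 0 ≤ x i := fun i hi => h0 i (mem_range.mpr (lt_trans (mem_range.mp hi) (Nat.lt_succ_self n)))
    have hn1 : ∀ i ∈ range n, x i ≤ 1 := fun i hi => h1 i (mem_range.mpr (lt_trans (mem_range.mp hi) (Nat.lt_succ_self n)))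
    have hP1 : ∏ i ∈ range n, (1 - x i) ≤ 1 := by
      apply Finset.prod_le_one
      · intro i hi; linarith [hn1 i hi]
      · intro i hi; linarith [hn0 i hi]
    have hxn0 := h0 n (self_mem_range_succ n)
    have hxn1 := h1 n (self_mem_range_succ n)
    nlinarith [ih hn0 hn1]

lemma sum_range_le (q : ℕ) : ∑ i ∈ range q, (i : ℝ) ≤ q ^ 2 / 2 := by
  induction q with
  | zero => simp
  | succ n ih =>
    rw [Finset.sum_range_succ]
    push_cast
    nlinarith

lemma prod_ratio (n q : ℕ) (hn : 0 < n) (hq : q ≤ n) :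
    0 < ∏ i ∈ range q, (1 - (i : ℝ) / n) ∧ (∏ i ∈ range q, (1 - (i : ℝ) / n)) ≤ 1 ∧
      1 - q ^ 2 / (2 * n) ≤ ∏ i ∈ range q, (1 - (i : ℝ) / n) := by
  have hn' : (0 : ℝ) < n := by exact_mod_cast hn
  have hpos : 0 < ∏ i ∈ range q, (1 - (i : ℝ) / n) := by
    apply Finset.prod_pos
    intro i hi
    have : (i : ℝ) < n := by exact_mod_cast lt_of_lt_of_le (mem_range.mp hi) hq
    have := (div_lt_one hn').mpr this
    linarith
  refine ⟨hpos, ?_, ?_⟩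
  · apply Finset.prod_le_one
    · intro i hi
      have : (i : ℝ) < n := by exact_mod_cast lt_of_lt_of_le (mem_range.mp hi) hq
      have := (div_lt_one hn').mpr this
      linarith
    · intro i hi
      have : (0:ℝ) ≤ (i:ℝ)/n := by positivity
      linarith
  · have h1 := weier q (fun i => (i : ℝ) / n) (fun i hi => by positivity)
      (fun i hi => by
        have h3 : (i : ℝ) < n := by exact_mod_cast lt_of_lt_of_le (mem_range.mp hi) hq
        have := (div_lt_one hn').mpr h3
        linarith)
    have h2 : ∑ i ∈ range q, (i : ℝ) / n ≤ q ^ 2 / (2 * n) := by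
      rw [← Finset.sum_div]
      rw [div_le_div_iff₀ hn' (by positivity)]
      have := sum_range_le q
      nlinarith
    calc 1 - (q:ℝ)^2 / (2*n) ≤ 1 - ∑ i ∈ range q, (i:ℝ)/n := by linarith
      _ ≤ _ := h1

lemma prod_split (n q : ℕ) :
    ∏ i ∈ range q, ((n : ℝ) - i) = (n : ℝ) ^ q * ∏ i ∈ range q, (1 - (i : ℝ) / n) := by
  rcases Nat.eq_zero_or_pos n with h | h
  · rcases Nat.eq_zero_or_pos q with hq | hq
    · subst hq; simp
    · subst h
      rw [Finset.prod_eq_zero (Finset.mem_range.mpr hq) (by simp)]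
      push_cast; rw [zero_pow hq.ne', zero_mul]
  · have hn' : (0 : ℝ) < n := by exact_mod_cast h
    have he : ∀ i ∈ range q, (n:ℝ) - i = (n:ℝ) * (1 - i/n) := fun i _ => by field_simp
    rw [Finset.prod_congr rfl he, Finset.prod_mul_distrib, Finset.prod_const, Finset.card_range]


lemma key_lower (Pa Pb Pk a b : ℝ) (hPa1 : Pa ≤ 1) (hPb1 : Pb ≤ 1) (hPa0 : 0 < Pa)
    (hPb0 : 0 < Pb) (hPk0 : 0 < Pk) (hPk1 : Pk ≤ 1) (ha : 1 - a ≤ Pa) (hb : 1 - b ≤ Pb) :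
    1 - a - b ≤ Pa * Pb / Pk := by
  have h2 : 1 - a - b ≤ Pa * Pb := by nlinarith
  have h1 : Pa * Pb ≤ Pa * Pb / Pk := by
    rw [le_div_iff₀ hPk0]
    nlinarith [mul_nonneg (sub_nonneg.mpr hPk1) (mul_nonneg hPa0.le hPb0.le)]
  linarith

lemma key_upper (Pa Pb Pk t : ℝ) (hPa1 : Pa ≤ 1) (hPb1 : Pb ≤ 1) (hPa0 : 0 ≤ Pa)
    (hPb0 : 0 ≤ Pb) (hPk0 : 0 < Pk) (hPkL : 1 - t / 2 ≤ Pk) (ht0 : 0 ≤ t) (ht1 : t ≤ 1 / 4) :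
    Pa * Pb / Pk ≤ 1 + 4 * t := by
  have hab : Pa * Pb ≤ 1 := by nlinarith
  rw [div_le_iff₀ hPk0]
  nlinarith [hab, mul_le_mul_of_nonneg_left hPkL (by linarith : (0:ℝ) ≤ 1 + 4 * t),
    mul_nonneg ht0 (by linarith : (0:ℝ) ≤ 7 / 2 - 2 * t)]

set_option maxHeartbeats 1000000 in
theorem stmt_8 (Na Nb k qa qb : ℕ) (hNa : 0 < Na) (hNb : 0 < Nb)
    (hq : qa + qb = k)
    (hk : (k : ℝ) ≤ Real.sqrt (Na + Nb) / 2)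
    (hqa : (qa : ℝ) ≤ Na / 2) (hqb : (qb : ℝ) ≤ Nb / 2) :
    let N : ℕ := Na + Nb
    let H : ℝ := (Nat.choose Na qa * Nat.choose Nb qb : ℝ) / (Nat.choose N k : ℝ)
    let M : ℝ := (Nat.choose k qa : ℝ) * ((Na : ℝ) / N) ^ qa * ((Nb : ℝ) / N) ^ qb
    (1 - 2 * qa ^ 2 / Na - 2 * qb ^ 2 / Nb) * M ≤ H ∧ H ≤ (1 + 4 * k ^ 2 / N) * M := by
  intro N H M
  have hNa' : (0:ℝ) < Na := by exact_mod_cast hNa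
  have hNb' : (0:ℝ) < Nb := by exact_mod_cast hNb
  have hN : 0 < N := Nat.add_pos_left hNa Nb
  have hN' : (0:ℝ) < N := by exact_mod_cast hN
  have hN1 : (1:ℝ) ≤ N := by exact_mod_cast hN
  have hNcast : ((N:ℕ):ℝ) = (Na:ℝ) + (Nb:ℝ) := by push_cast [N]; ring
  have hsq : Real.sqrt ((Na:ℝ) + Nb) ^ 2 = (Na:ℝ) + Nb := Real.sq_sqrt (by positivity)
  have hk2 : (k:ℝ)^2 ≤ (N:ℝ)/4 := by
    rw [hNcast]
    nlinarith [Real.sqrt_nonneg ((Na:ℝ) + Nb), Nat.cast_nonneg (α := ℝ) k]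
  have hkN : k ≤ N := by
    by_contra hc
    push_neg at hc
    have hc' : (N:ℝ) < k := by exact_mod_cast hc
    nlinarith [hk2, sq_nonneg ((k:ℝ) - N), mul_lt_mul_of_pos_left hc' hN',
      mul_le_mul_of_nonneg_left hN1 hN'.le]
  have hqaNa : qa ≤ Na := by
    have : (qa:ℝ) ≤ Na := by linarith
    exact_mod_cast this
  have hqbNb : qb ≤ Nb := by
    have : (qb:ℝ) ≤ Nb := by linarith
    exact_mod_cast this
  have hqak : qa ≤ k := by omega
  set Pa := ∏ i ∈ range qa, (1 - (i : ℝ) / Na) with hPa_def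
  set Pb := ∏ i ∈ range qb, (1 - (i : ℝ) / Nb) with hPb_def
  set Pk := ∏ i ∈ range k, (1 - (i : ℝ) / N) with hPk_def
  obtain ⟨hPa0, hPa1, hPaL⟩ := prod_ratio Na qa hNa hqaNa
  obtain ⟨hPb0, hPb1, hPbL⟩ := prod_ratio Nb qb hNb hqbNb
  obtain ⟨hPk0, hPk1, hPkL⟩ := prod_ratio N k hN hkN
  rw [← hPa_def] at hPa0 hPa1 hPaL
  rw [← hPb_def] at hPb0 hPb1 hPbL
  rw [← hPk_def] at hPk0 hPk1 hPkL
  have e1 : (Nat.choose Na qa : ℝ) * (Nat.factorial qa : ℝ) = (Na:ℝ)^qa * Pa := by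
    rw [choose_eq_prod Na qa hqaNa, prod_split, hPa_def]
  have e2 : (Nat.choose Nb qb : ℝ) * (Nat.factorial qb : ℝ) = (Nb:ℝ)^qb * Pb := by
    rw [choose_eq_prod Nb qb hqbNb, prod_split, hPb_def]
  have e3 : (Nat.choose N k : ℝ) * (Nat.factorial k : ℝ) = (N:ℝ)^k * Pk := by
    rw [choose_eq_prod N k hkN, prod_split, hPk_def]
  have hck : (Nat.choose k qa : ℝ) * (Nat.factorial qa : ℝ) * (Nat.factorial qb : ℝ)
      = (Nat.factorial k : ℝ) := by
    have h := Nat.choose_mul_factorial_mul_factorial hqak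
    have hkq : k - qa = qb := by omega
    rw [hkq] at h
    exact_mod_cast h
  have hfa : (Nat.factorial qa : ℝ) ≠ 0 := by positivity
  have hfb : (Nat.factorial qb : ℝ) ≠ 0 := by positivity
  have hfk : (Nat.factorial k : ℝ) ≠ 0 := by positivity
  have hCN0 : (0:ℝ) < (Nat.choose N k : ℝ) := by exact_mod_cast Nat.choose_pos hkN
  have eM : M = (Nat.choose k qa : ℝ) * ((Na:ℝ)^qa * (Nb:ℝ)^qb) / (N:ℝ)^k := by
    show (Nat.choose k qa : ℝ) * ((Na : ℝ) / N) ^ qa * ((Nb : ℝ) / N) ^ qb = _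
    rw [div_pow, div_pow, ← hq, pow_add]
    field_simp
  have poly : (Nat.choose Na qa : ℝ) * (Nat.choose Nb qb : ℝ) * ((N:ℝ)^k * Pk) =
      (Nat.choose k qa : ℝ) * ((Na:ℝ)^qa * (Nb:ℝ)^qb) * (Pa * Pb) * (Nat.choose N k : ℝ) := by
    apply mul_right_cancel₀ (mul_ne_zero hfa hfb)
    linear_combination ((Nat.choose Nb qb : ℝ) * (Nat.factorial qb : ℝ) * ((N:ℝ)^k * Pk)) * e1
      + ((Na:ℝ)^qa * Pa * ((N:ℝ)^k * Pk)) * e2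
      - ((Na:ℝ)^qa * (Nb:ℝ)^qb * Pa * Pb) * e3
      - ((Na:ℝ)^qa * (Nb:ℝ)^qb * Pa * Pb * (Nat.choose N k : ℝ)) * hck
  have hH : H = M * (Pa * Pb / Pk) := by
    show (Nat.choose Na qa * Nat.choose Nb qb : ℝ) / (Nat.choose N k : ℝ) = _
    rw [eM, div_mul_eq_mul_div, div_eq_div_iff hCN0.ne' (by positivity : ((N:ℝ)^k) ≠ 0)]
    push_cast
    field_simp
    linear_combination poly
  have hM0 : 0 ≤ M := by
    show 0 ≤ (Nat.choose k qa : ℝ) * ((Na : ℝ) / N) ^ qa * ((Nb : ℝ) / N) ^ qb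
    positivity
  have ht1 : (k:ℝ)^2/N ≤ 1/4 := by
    rw [div_le_iff₀ hN']
    linarith
  have ht0 : (0:ℝ) ≤ (k:ℝ)^2/N := by positivity
  have htL : 1 - ((k:ℝ)^2/N)/2 ≤ Pk := by
    have hdd : ((k:ℝ)^2/N)/2 = (k:ℝ)^2/(2*N) := by rw [div_div, mul_comm]
    rw [hdd]
    exact hPkL
  constructor
  · -- lower bound
    have hlow0 := key_lower Pa Pb Pk ((qa:ℝ)^2/(2*Na)) ((qb:ℝ)^2/(2*Nb))
      hPa1 hPb1 hPa0 hPb0 hPk0 hPk1 (by linarith) (by linarith)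
    have ha : (qa:ℝ)^2/(2*Na) ≤ 2*(qa:ℝ)^2/Na := by
      rw [div_le_div_iff₀ (by positivity) hNa']
      have := mul_nonneg (sq_nonneg (qa:ℝ)) hNa'.le
      linarith [this]
    have hb : (qb:ℝ)^2/(2*Nb) ≤ 2*(qb:ℝ)^2/Nb := by
      rw [div_le_div_iff₀ (by positivity) hNb']
      have := mul_nonneg (sq_nonneg (qb:ℝ)) hNb'.le
      linarith [this]
    have hlow : 1 - 2*(qa:ℝ)^2/Na - 2*(qb:ℝ)^2/Nb ≤ Pa*Pb/Pk := by linarith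
    rw [hH]
    calc (1 - 2*(qa:ℝ)^2/Na - 2*(qb:ℝ)^2/Nb) * M ≤ (Pa*Pb/Pk) * M :=
          mul_le_mul_of_nonneg_right hlow hM0
      _ = M * (Pa*Pb/Pk) := mul_comm _ _
  · -- upper bound
    have hup := key_upper Pa Pb Pk ((k:ℝ)^2/N) hPa1 hPb1 hPa0.le hPb0.le hPk0 htL ht0 ht1
    have hup' : Pa*Pb/Pk ≤ 1 + 4*(k:ℝ)^2/N := by
      have : 4*((k:ℝ)^2/N) = 4*(k:ℝ)^2/N := by rw [mul_div_assoc]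
      linarith [hup, this.le, this.ge]
    rw [hH]
    calc M * (Pa*Pb/Pk) ≤ M * (1 + 4*(k:ℝ)^2/N) := mul_le_mul_of_nonneg_left hup' hM0
      _ = (1 + 4*(k:ℝ)^2/N) * M := mul_comm _ _
end

section
/- Let N_a, N_b, N_c be positive naturals with N = N_a + N_b + N_c, and let q_a, q_b, q_c be naturals with q_a+q_b+q_c = k, k ≤ √N/2, q_a ≤ N_a/2, q_b ≤ N_b/2, q_c ≤ N_c/2. Then the three-class hypergeometric probability H₃ = [C(N_a,q_a)·C(N_b,q_b)·C(N_c,q_c)]/C(N,k) and the multinomial probability M = (k!/(q_a!·q_b!·q_c!))·(N_a/N)^{q_a}·(N_b/N)^{q_b}·(N_c/N)^{q_c} satisfy (1 - 2q_a²/N_a - 2q_b²/N_b - 2q_c²/N_c)·M ≤ H₃ ≤ (1 + 4k²/N)·M. -/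
/-!
With `ρ(n, q) = n.descFactorial q / n ^ q = ∏_{i<q} (1 - i/n) ∈ [0, 1]` and
`C(n, q) = n.descFactorial q / q!`, the ratio `H₃ / M` is exactly `ρ_a ρ_b ρ_c / ρ_N`.
Everything then follows from `ρ(n, q) ≥ 1 - q²/(2n)`: three numbers in `[0, 1]` have product at
least `1` minus the sum of their defects, and `1 / ρ_N ≤ 1 / (1 - k²/(2N)) ≤ 1 + 4k²/N`
as long as `k² ≤ 7N/4`.
-/

noncomputable def descFactorialRatio (n q : ℕ) : ℝ := n.descFactorial q / (n : ℝ) ^ q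

lemma descFactorialRatio_nonneg (n q : ℕ) : 0 ≤ descFactorialRatio n q := by
  unfold descFactorialRatio; positivity

lemma descFactorialRatio_pos {n q : ℕ} (h : q ≤ n) : 0 < descFactorialRatio n q := by
  rcases Nat.eq_zero_or_pos q with rfl | hq
  · simp [descFactorialRatio]
  · have hd : 0 < n.descFactorial q :=
      Nat.pos_of_ne_zero (Nat.descFactorial_eq_zero_iff_lt.not.2 h.not_gt)
    exact div_pos (by exact_mod_cast hd) (pow_pos (by exact_mod_cast hq.trans_le h) _)

lemma descFactorialRatio_le_one (n q : ℕ) : descFactorialRatio n q ≤ 1 :=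
  div_le_one_of_le₀ (by exact_mod_cast Nat.descFactorial_le_pow n q) (by positivity)

lemma one_sub_sq_div_le_descFactorialRatio {n : ℕ} (hn : 0 < n) (q : ℕ) :
    1 - (q : ℝ) ^ 2 / (2 * n) ≤ descFactorialRatio n q := by
  have hn' : (0 : ℝ) < n := by exact_mod_cast hn
  rw [descFactorialRatio, le_div_iff₀ (by positivity)]
  induction q with
  | zero => simp
  | succ q ih =>
    rcases lt_or_ge q n with hq | hq
    · have hstep : (1 - ((q + 1 : ℕ) : ℝ) ^ 2 / (2 * n)) * (n : ℝ) ^ (q + 1) =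
          (1 - (q : ℝ) ^ 2 / (2 * n)) * n ^ q * (n - q) - n ^ q * (1 / 2 + q ^ 3 / (2 * n)) := by
        push_cast; field_simp; ring
      rw [hstep, Nat.descFactorial_succ, Nat.cast_mul, Nat.cast_sub hq.le]
      calc _ ≤ (1 - (q : ℝ) ^ 2 / (2 * n)) * n ^ q * (n - q) := sub_le_self _ (by positivity)
        _ ≤ n.descFactorial q * (n - q) :=
          mul_le_mul_of_nonneg_right ih (by rw [sub_nonneg]; exact_mod_cast hq.le)
        _ = _ := mul_comm _ _
    · rw [(Nat.descFactorial_eq_zero_iff_lt).2 (by omega), Nat.cast_zero]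
      refine mul_nonpos_of_nonpos_of_nonneg ?_ (by positivity)
      rw [sub_nonpos, le_div_iff₀ (by positivity)]
      have : (n : ℝ) ≤ q := by exact_mod_cast hq
      push_cast; nlinarith

lemma add_sub_one_le_mul {x y : ℝ} (hx : x ≤ 1) (hy : y ≤ 1) : x + y - 1 ≤ x * y := by
  nlinarith [mul_nonneg (sub_nonneg.2 hx) (sub_nonneg.2 hy)]

lemma one_le_one_add_four_mul_mul {x r : ℝ} (hx₀ : 0 ≤ x) (hx : x ≤ 7 / 4) (hr : 1 - x / 2 ≤ r) :
    1 ≤ (1 + 4 * x) * r :=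
  calc 1 ≤ (1 + 4 * x) * (1 - x / 2) := by nlinarith
    _ ≤ (1 + 4 * x) * r := mul_le_mul_of_nonneg_left hr (by positivity)

noncomputable def hypergeometricCorrection (Na Nb Nc qa qb qc : ℕ) : ℝ :=
  descFactorialRatio Na qa * descFactorialRatio Nb qb * descFactorialRatio Nc qc /
    descFactorialRatio (Na + Nb + Nc) (qa + qb + qc)

lemma choose_mul_choose_mul_choose_div_choose_eq {Na Nb Nc : ℕ} (qa qb qc : ℕ)
    (hNa : 0 < Na) (hNb : 0 < Nb) (hNc : 0 < Nc) (hk : qa + qb + qc ≤ Na + Nb + Nc) :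
    (Na.choose qa * Nb.choose qb * Nc.choose qc : ℝ) / (Na + Nb + Nc).choose (qa + qb + qc) =
      ((qa + qb + qc).factorial / (qa.factorial * qb.factorial * qc.factorial : ℝ)) *
        ((Na : ℝ) / (Na + Nb + Nc : ℕ)) ^ qa * ((Nb : ℝ) / (Na + Nb + Nc : ℕ)) ^ qb *
        ((Nc : ℝ) / (Na + Nb + Nc : ℕ)) ^ qc * hypergeometricCorrection Na Nb Nc qa qb qc := by
  have hD : ((Na + Nb + Nc).descFactorial (qa + qb + qc) : ℝ) ≠ 0 := by
    exact_mod_cast (Nat.descFactorial_eq_zero_iff_lt.not.2 hk.not_gt)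
  have hN : ((Na + Nb + Nc : ℕ) : ℝ) ≠ 0 := by positivity
  simp only [Nat.choose_eq_descFactorial_div_factorial,
    Nat.cast_div (Nat.factorial_dvd_descFactorial _ _) (Nat.cast_ne_zero.2 (Nat.factorial_ne_zero _)),
    hypergeometricCorrection, descFactorialRatio, div_pow]
  field_simp
  ring

lemma hypergeometricCorrection_le {Na Nb Nc qa qb qc : ℕ} (hN : 0 < Na + Nb + Nc)
    (hk : 4 * ((qa + qb + qc : ℕ) : ℝ) ^ 2 ≤ 7 * (Na + Nb + Nc : ℕ)) :
    hypergeometricCorrection Na Nb Nc qa qb qc ≤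
      1 + 4 * ((qa + qb + qc : ℕ) : ℝ) ^ 2 / (Na + Nb + Nc : ℕ) := by
  have hN' : (0 : ℝ) < (Na + Nb + Nc : ℕ) := by exact_mod_cast hN
  set ρ := descFactorialRatio (Na + Nb + Nc) (qa + qb + qc)
  set x : ℝ := ((qa + qb + qc : ℕ) : ℝ) ^ 2 / (Na + Nb + Nc : ℕ)
  have hρ : 1 ≤ (1 + 4 * x) * ρ := by
    refine one_le_one_add_four_mul_mul (by positivity) ?_ ?_
    · rw [div_le_iff₀ hN']; linarith
    · convert one_sub_sq_div_le_descFactorialRatio hN (qa + qb + qc) using 2; ring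
  have hρ₀ : 0 < ρ := by
    by_contra! h
    nlinarith [show 0 ≤ x by positivity]
  calc hypergeometricCorrection Na Nb Nc qa qb qc ≤ 1 / ρ := by
        refine div_le_div_of_nonneg_right ?_ hρ₀.le
        exact mul_le_one₀ (mul_le_one₀ (descFactorialRatio_le_one _ _)
          (descFactorialRatio_nonneg _ _) (descFactorialRatio_le_one _ _))
          (descFactorialRatio_nonneg _ _) (descFactorialRatio_le_one _ _)
    _ ≤ 1 + 4 * x := by rw [div_le_iff₀ hρ₀]; linarith
    _ = _ := by rw [mul_div_assoc]

lemma le_hypergeometricCorrection {Na Nb Nc qa qb qc : ℕ}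
    (hNa : 0 < Na) (hNb : 0 < Nb) (hNc : 0 < Nc) (hk : qa + qb + qc ≤ Na + Nb + Nc) :
    1 - 2 * (qa : ℝ) ^ 2 / Na - 2 * (qb : ℝ) ^ 2 / Nb - 2 * (qc : ℝ) ^ 2 / Nc ≤
      hypergeometricCorrection Na Nb Nc qa qb qc := by
  have hratio : ∀ {n : ℕ} (q : ℕ), 0 < n → 1 - 2 * (q : ℝ) ^ 2 / n ≤ descFactorialRatio n q := by
    intro n q hn
    refine le_trans ?_ (one_sub_sq_div_le_descFactorialRatio hn q)
    have : (0 : ℝ) < n := by exact_mod_cast hn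
    rw [sub_le_sub_iff_left, div_le_div_iff₀ (by positivity) this]
    nlinarith [sq_nonneg (q : ℝ)]
  have ha := descFactorialRatio_le_one Na qa
  have hb := descFactorialRatio_le_one Nb qb
  have hc := descFactorialRatio_le_one Nc qc
  calc 1 - 2 * (qa : ℝ) ^ 2 / Na - 2 * (qb : ℝ) ^ 2 / Nb - 2 * (qc : ℝ) ^ 2 / Nc
      ≤ descFactorialRatio Na qa * descFactorialRatio Nb qb + descFactorialRatio Nc qc - 1 := by
        linarith [hratio qa hNa, hratio qb hNb, hratio qc hNc, add_sub_one_le_mul ha hb]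
    _ ≤ descFactorialRatio Na qa * descFactorialRatio Nb qb * descFactorialRatio Nc qc :=
        add_sub_one_le_mul (mul_le_one₀ ha (descFactorialRatio_nonneg _ _) hb) hc
    _ ≤ hypergeometricCorrection Na Nb Nc qa qb qc :=
        le_div_self (mul_nonneg (mul_nonneg (descFactorialRatio_nonneg _ _)
          (descFactorialRatio_nonneg _ _)) (descFactorialRatio_nonneg _ _))
          (descFactorialRatio_pos hk) (descFactorialRatio_le_one _ _)

theorem stmt_9_general (Na Nb Nc k qa qb qc : ℕ) (hNa : 0 < Na) (hNb : 0 < Nb) (hNc : 0 < Nc)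
    (hq : qa + qb + qc = k)
    (hk : (k : ℝ) ≤ Real.sqrt (Na + Nb + Nc) / 2) :
    let N : ℕ := Na + Nb + Nc
    let H : ℝ := (Nat.choose Na qa * Nat.choose Nb qb * Nat.choose Nc qc : ℝ)
      / (Nat.choose N k : ℝ)
    let M : ℝ := ((Nat.factorial k : ℝ) /
        (Nat.factorial qa * Nat.factorial qb * Nat.factorial qc : ℝ)) *
      ((Na : ℝ) / N) ^ qa * ((Nb : ℝ) / N) ^ qb * ((Nc : ℝ) / N) ^ qc
    (1 - 2 * qa ^ 2 / Na - 2 * qb ^ 2 / Nb - 2 * qc ^ 2 / Nc) * M ≤ H ∧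
      H ≤ (1 + 4 * k ^ 2 / N) * M := by
  intro N H M
  subst hq
  have h4k : 4 * ((qa + qb + qc : ℕ) : ℝ) ^ 2 ≤ N := by
    have h := (Real.le_sqrt (by positivity) (by positivity)).1 (show 2 * ((qa + qb + qc : ℕ) : ℝ)
      ≤ √(Na + Nb + Nc) by linarith)
    simp only [N]; push_cast at h ⊢; linarith
  have hkN : qa + qb + qc ≤ N := by
    have : 4 * (qa + qb + qc) ^ 2 ≤ N := by exact_mod_cast h4k
    linarith [Nat.le_self_pow two_ne_zero (qa + qb + qc)]
  have hHM : H = M * hypergeometricCorrection Na Nb Nc qa qb qc :=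
    choose_mul_choose_mul_choose_div_choose_eq qa qb qc hNa hNb hNc hkN
  have hM : 0 ≤ M := by positivity
  rw [hHM, mul_comm _ M, mul_comm _ M]
  exact ⟨mul_le_mul_of_nonneg_left (le_hypergeometricCorrection hNa hNb hNc hkN) hM,
    mul_le_mul_of_nonneg_left (hypergeometricCorrection_le (by omega) (by linarith)) hM⟩

theorem stmt_9 (Na Nb Nc k qa qb qc : ℕ) (hNa : 0 < Na) (hNb : 0 < Nb) (hNc : 0 < Nc)
    (hq : qa + qb + qc = k)
    (hk : (k : ℝ) ≤ Real.sqrt (Na + Nb + Nc) / 2)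
    (hqa : (qa : ℝ) ≤ Na / 2) (hqb : (qb : ℝ) ≤ Nb / 2) (hqc : (qc : ℝ) ≤ Nc / 2) :
    let N : ℕ := Na + Nb + Nc
    let H : ℝ := (Nat.choose Na qa * Nat.choose Nb qb * Nat.choose Nc qc : ℝ)
      / (Nat.choose N k : ℝ)
    let M : ℝ := ((Nat.factorial k : ℝ) /
        (Nat.factorial qa * Nat.factorial qb * Nat.factorial qc : ℝ)) *
      ((Na : ℝ) / N) ^ qa * ((Nb : ℝ) / N) ^ qb * ((Nc : ℝ) / N) ^ qc
    (1 - 2 * qa ^ 2 / Na - 2 * qb ^ 2 / Nb - 2 * qc ^ 2 / Nc) * M ≤ H ∧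
      H ≤ (1 + 4 * k ^ 2 / N) * M :=
  stmt_9_general Na Nb Nc k qa qb qc hNa hNb hNc hq hk
end

section
/- Let b ∈ (0, 1/2) with b² · ⌈1/b⌉ ≤ 1/3 (e.g. b ≤ 1/3), and let k ≤ ⌈1/b⌉. For any string s ∈ {0,1}^k, the uniform probability 2^{-k} is at most 3 times the probability of s under the mixture (1/2)·(i.i.d. Bernoulli(1/2-b)) + (1/2)·(i.i.d. Bernoulli(1/2+b)). -/
/-!
Put `p = 1/2 - b`, `r = 1/2 + b` and, by symmetry, `q₁ = q₀ + d`. The mixture probability factors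
as `(p r)^q₀ · (p^d + r^d) / 2`; convexity of `x ↦ x^d` bounds the second factor below by
`(1/2)^d`, and `4 p r = 1 - 4b²`, so the mixture is at least `2^{-k} (1 - 4b²)^{q₀}`. Since
`2 q₀ ≤ k ≤ ⌈1/b⌉`, Bernoulli's inequality gives `(1 - 4b²)^{q₀} ≥ 1 - 4b² q₀ ≥ 1/3`.
-/

lemma two_mul_half_add_pow_le_pow_add_pow {x y : ℝ} (hx : 0 ≤ x) (hy : 0 ≤ y) (n : ℕ) :
    2 * ((x + y) / 2) ^ n ≤ x ^ n + y ^ n := by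
  have h := (convexOn_pow n).2 hx hy (show (0 : ℝ) ≤ 1 / 2 by norm_num)
    (show (0 : ℝ) ≤ 1 / 2 by norm_num) (by norm_num)
  simp only [smul_eq_mul] at h
  rw [show (x + y) / 2 = 1 / 2 * x + 1 / 2 * y by ring]
  linarith

lemma half_pow_mul_four_mul_pow_le_mixture {p r : ℝ} (hp : 0 ≤ p) (hr : 0 ≤ r)
    (hpr : p + r = 1) (m d : ℕ) :
    (1 / 2 : ℝ) ^ (m + (m + d)) * (4 * p * r) ^ m
      ≤ 1 / 2 * (p ^ m * r ^ (m + d) + r ^ m * p ^ (m + d)) := by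
  have hconv := two_mul_half_add_pow_le_pow_add_pow hp hr d
  rw [hpr] at hconv
  calc (1 / 2 : ℝ) ^ (m + (m + d)) * (4 * p * r) ^ m
      _ = ((1 / 2) ^ 2 * (4 * p * r)) ^ m * (1 / 2) ^ d := by
        rw [show m + (m + d) = 2 * m + d by ring, pow_add, pow_mul, mul_pow (_ ^ 2)]; ring
      _ = (p * r) ^ m * (1 / 2) ^ d := by rw [show (1 / 2 : ℝ) ^ 2 * (4 * p * r) = p * r by ring]
      _ ≤ (p * r) ^ m * ((p ^ d + r ^ d) / 2) := by gcongr; linarith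
      _ = 1 / 2 * (p ^ m * r ^ (m + d) + r ^ m * p ^ (m + d)) := by ring

theorem stmt_12 (b : ℝ) (hb0 : 0 < b) (hb : b < 1/2)
    (hbL : b ^ 2 * (⌈1 / b⌉₊ : ℝ) ≤ 1/3) (k q0 q1 : ℕ)
    (hk : k ≤ ⌈1 / b⌉₊) (hq : q0 + q1 = k) :
    (1/2 : ℝ) ^ k ≤ 3 * ((1/2) * ((1/2 - b) ^ q0 * (1/2 + b) ^ q1
      + (1/2 + b) ^ q0 * (1/2 - b) ^ q1)) := by
  wlog hle : q0 ≤ q1 generalizing q0 q1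
  · linarith [this q1 q0 (by omega) (by omega)]
  obtain ⟨d, rfl⟩ := Nat.exists_eq_add_of_le hle
  subst hq
  have hq0 : 4 * b ^ 2 * q0 ≤ 2 / 3 := by
    have : ((q0 + (q0 + d) : ℕ) : ℝ) ≤ ⌈1 / b⌉₊ := by exact_mod_cast hk
    push_cast at this
    nlinarith [mul_le_mul_of_nonneg_left this (sq_nonneg b), sq_nonneg b]
  have hthird : (1 / 3 : ℝ) ≤ (4 * (1 / 2 - b) * (1 / 2 + b)) ^ q0 := by
    have h := one_add_mul_le_pow (a := -(4 * b ^ 2)) (by nlinarith) q0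
    rw [show 4 * (1 / 2 - b) * (1 / 2 + b) = 1 + -(4 * b ^ 2) by ring]
    linarith
  calc (1 / 2 : ℝ) ^ (q0 + (q0 + d)) = 3 * ((1 / 2) ^ (q0 + (q0 + d)) * (1 / 3)) := by ring
    _ ≤ 3 * ((1 / 2) ^ (q0 + (q0 + d)) * (4 * (1 / 2 - b) * (1 / 2 + b)) ^ q0) := by gcongr
    _ ≤ _ := by
      gcongr 3 * ?_
      exact half_pow_mul_four_mul_pow_le_mixture (by linarith) (by linarith) (by ring) q0 d
end
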